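/- The family consisting of the images of the powers xⁿ (n ∈ ℕ, including x⁰ = 1) together with the image of y forms a ℂ-vector-space basis of A_N. In particular, A_N is isomorphic as a ℂ-vector space to ℂ[x] ⊕ ℂ·y, with multiplication determined by y² = 0, y·x = −N·y, x·y = N·y. -/

import Mathlib

/-- The generator `x` in the free algebra on two generators. -/
noncomputable def Xgen : FreeAlgebra ℂ (Fin 2) := FreeAlgebra.ι ℂ 0

/-- The generator `y` in the free algebra on two generators. -/
noncomputable def Ygen : FreeAlgebra ℂ (Fin 2) := FreeAlgebra.ι ℂ 1

/-- The defining relations of the algebra `A_N`: `y·y = 0`, `y·x = -N·y`, `x·y = N·y`. -/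
inductive relN (N : ℕ) : FreeAlgebra ℂ (Fin 2) → FreeAlgebra ℂ (Fin 2) → Prop
  | yy : relN N (Ygen * Ygen) 0
  | yx : relN N (Ygen * Xgen) ((-(N : ℂ)) • Ygen)
  | xy : relN N (Xgen * Ygen) ((N : ℂ) • Ygen)

/-- The algebra `A_N`: the quotient of the free associative unital `ℂ`-algebra on `x, y`
by the two-sided ideal generated by `y·y`, `y·x + N·y`, `x·y − N·y`. -/
noncomputable abbrev AN (N : ℕ) := RingQuot (relN N)

/-- The image of the generator `x` in `A_N`. -/
noncomputable def xN (N : ℕ) : AN N := RingQuot.mkAlgHom ℂ (relN N) Xgen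

/-- The image of the generator `y` in `A_N`. -/
noncomputable def yN (N : ℕ) : AN N := RingQuot.mkAlgHom ℂ (relN N) Ygen

open Polynomial

noncomputable def Xop (N : ℕ) : Module.End ℂ (ℂ[X] × ℂ) :=
  LinearMap.prodMap (LinearMap.mulLeft ℂ (X : ℂ[X])) ((N : ℂ) • LinearMap.id)

noncomputable def Yop (N : ℕ) : Module.End ℂ (ℂ[X] × ℂ) :=
  (LinearMap.inr ℂ ℂ[X] ℂ).comp ((Polynomial.leval (-(N:ℂ))).comp (LinearMap.fst ℂ ℂ[X] ℂ))

lemma Xop_apply (N : ℕ) (p : ℂ[X] × ℂ) : Xop N p = (X * p.1, (N : ℂ) * p.2) := rfl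
lemma Yop_apply (N : ℕ) (p : ℂ[X] × ℂ) : Yop N p = (0, p.1.eval (-(N:ℂ))) := rfl

noncomputable def Fhom (N : ℕ) : FreeAlgebra ℂ (Fin 2) →ₐ[ℂ] Module.End ℂ (ℂ[X] × ℂ) :=
  FreeAlgebra.lift ℂ ![Xop N, Yop N]

lemma Fhom_rel (N : ℕ) : ∀ ⦃a b⦄, relN N a b → Fhom N a = Fhom N b := by
  intro a b r
  cases r with
  | yy =>
      simp only [Fhom, Xgen, Ygen, map_mul, map_zero, FreeAlgebra.lift_ι_apply]
      refine LinearMap.ext fun p => ?_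
      simp [Module.End.mul_apply, Yop_apply]
  | yx =>
      simp only [Fhom, Xgen, Ygen, map_mul, map_smul, FreeAlgebra.lift_ι_apply]
      refine LinearMap.ext fun p => ?_
      simp [Module.End.mul_apply, Yop_apply, Xop_apply, mul_comm]
  | xy =>
      simp only [Fhom, Xgen, Ygen, map_mul, map_smul, FreeAlgebra.lift_ι_apply]
      refine LinearMap.ext fun p => ?_
      simp [Module.End.mul_apply, Yop_apply, Xop_apply]

noncomputable def psi (N : ℕ) : AN N →ₐ[ℂ] Module.End ℂ (ℂ[X] × ℂ) :=
  RingQuot.liftAlgHom ℂ ⟨Fhom N, Fhom_rel N⟩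

lemma psi_x (N : ℕ) : psi N (xN N) = Xop N := by
  simp [psi, xN, RingQuot.liftAlgHom_mkAlgHom_apply, Fhom, Xgen, FreeAlgebra.lift_ι_apply]

lemma psi_y (N : ℕ) : psi N (yN N) = Yop N := by
  simp [psi, yN, RingQuot.liftAlgHom_mkAlgHom_apply, Fhom, Ygen, FreeAlgebra.lift_ι_apply]

lemma Xop_pow_one (N : ℕ) (n : ℕ) : (Xop N ^ n) (1, 0) = ((X : ℂ[X]) ^ n, 0) := by
  induction n with
  | zero => simp
  | succ n ih => rw [pow_succ', Module.End.mul_apply, ih, Xop_apply]; simp [pow_succ, mul_comm]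

example : True := trivial

lemma yy_rel (N : ℕ) : yN N * yN N = 0 := by
  have := RingQuot.mkAlgHom_rel ℂ (relN.yy (N := N))
  simpa [yN, map_mul] using this

lemma yx_rel (N : ℕ) : yN N * xN N = -((N : ℂ) • yN N) := by
  have := RingQuot.mkAlgHom_rel ℂ (relN.yx (N := N))
  simp only [map_mul, map_smul] at this
  rw [yN, xN, this]
  module

lemma xy_rel (N : ℕ) : xN N * yN N = (N : ℂ) • yN N := by
  have := RingQuot.mkAlgHom_rel ℂ (relN.xy (N := N))
  simpa [yN, xN, map_mul, map_smul] using this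

lemma xpow_mul_y (N n : ℕ) : xN N ^ n * yN N = ((N : ℂ) ^ n) • yN N := by
  induction n with
  | zero => simp
  | succ n ih =>
      rw [pow_succ, mul_assoc, xy_rel, mul_smul_comm, ih, smul_smul, pow_succ, mul_comm]

lemma y_mul_xpow (N n : ℕ) : yN N * xN N ^ n = ((-(N : ℂ)) ^ n) • yN N := by
  induction n with
  | zero => simp
  | succ n ih =>
      rw [pow_succ, ← mul_assoc, ih, smul_mul_assoc, yx_rel]
      rw [pow_succ]
      module

/-- the family of the powers `xⁿ` (`n ∈ ℕ`) together with `y` is a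
`ℂ`-vector-space basis of `A_N`; the multiplication is determined by
`y² = 0`, `y·x = −N·y`, `x·y = N·y`. -/
theorem stmt0 (N : ℕ) (hN : 0 < N) :
    LinearIndependent ℂ (fun i : ℕ ⊕ Unit => Sum.elim (fun n => (xN N) ^ n)
        (fun _ => yN N) i) ∧
    Submodule.span ℂ (Set.range (fun i : ℕ ⊕ Unit => Sum.elim (fun n => (xN N) ^ n)
        (fun _ => yN N) i)) = ⊤ ∧
    yN N * yN N = 0 ∧ yN N * xN N = -((N : ℂ) • yN N) ∧ xN N * yN N = (N : ℂ) • yN N := by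
  set f : ℕ ⊕ Unit → AN N := fun i => Sum.elim (fun n => (xN N) ^ n) (fun _ => yN N) i with hf
  refine ⟨?_, ?_, yy_rel N, yx_rel N, xy_rel N⟩
  · -- linear independence
    set L : AN N →ₗ[ℂ] ℂ[X] × ℂ :=
      (LinearMap.applyₗ ((1 : ℂ[X]), (0 : ℂ))).comp (psi N).toLinearMap with hL
    have hcomp : L ∘ f = ⇑((Polynomial.basisMonomials ℂ).prod (Module.Basis.singleton Unit ℂ)) := by
      funext i
      cases i with
      | inl n =>
          have : L (f (Sum.inl n)) = (Xop N ^ n) (1, 0) := by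
            simp [hL, hf, LinearMap.applyₗ_apply_apply, map_pow, psi_x]
          rw [Function.comp_apply, this, Xop_pow_one]
          ext <;> simp [Module.Basis.prod_apply_inl_fst, Module.Basis.prod_apply_inl_snd,
            Polynomial.X_pow_eq_monomial]
      | inr u =>
          have : L (f (Sum.inr u)) = Yop N (1, 0) := by
            simp [hL, hf, LinearMap.applyₗ_apply_apply, psi_y]
          rw [Function.comp_apply, this, Yop_apply]
          ext <;> simp [Module.Basis.prod_apply_inr_fst, Module.Basis.prod_apply_inr_snd, Module.Basis.singleton]
    apply LinearIndependent.of_comp L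
    rw [hcomp]
    exact ((Polynomial.basisMonomials ℂ).prod (Module.Basis.singleton Unit ℂ)).linearIndependent
  · -- spanning
    set S := Submodule.span ℂ (Set.range f) with hS
    have h1 : (1 : AN N) ∈ S := by
      have : f (Sum.inl 0) = 1 := by simp [hf]
      exact this ▸ Submodule.subset_span ⟨Sum.inl 0, rfl⟩
    have hx : ∀ n, xN N ^ n ∈ S := fun n => Submodule.subset_span ⟨Sum.inl n, rfl⟩
    have hy : yN N ∈ S := Submodule.subset_span ⟨Sum.inr (), rfl⟩
    have hmul : ∀ u ∈ S, ∀ v ∈ S, u * v ∈ S := by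
      intro u hu
      induction hu using Submodule.span_induction with
      | mem u hu =>
          obtain ⟨i, rfl⟩ := hu
          intro v hv
          induction hv using Submodule.span_induction with
          | mem v hv =>
              obtain ⟨j, rfl⟩ := hv
              cases i with
              | inl m =>
                  cases j with
                  | inl n =>
                      have : f (Sum.inl m) * f (Sum.inl n) = xN N ^ (m + n) := by
                        simp [hf, pow_add]
                      rw [this]; exact hx _
                  | inr _ =>
                      have : f (Sum.inl m) * f (Sum.inr ()) = ((N:ℂ)^m) • yN N := by
                        simp [hf, xpow_mul_y]
                      rw [this]; exact S.smul_mem _ hy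
              | inr u =>
                  cases j with
                  | inl n =>
                      have : f (Sum.inr ()) * f (Sum.inl n) = ((-(N:ℂ))^n) • yN N := by
                        simp [hf, y_mul_xpow]
                      rw [this]; exact S.smul_mem _ hy
                  | inr _ =>
                      have : f (Sum.inr ()) * f (Sum.inr ()) = 0 := by
                        simp [hf, yy_rel]
                      rw [this]; exact S.zero_mem
          | zero => simp
          | add a b _ _ ha hb => rw [mul_add]; exact S.add_mem ha hb
          | smul c a _ ha => rw [mul_smul_comm]; exact S.smul_mem _ ha
      | zero => intro v hv; simp
      | add a b _ _ ha hb => intro v hv; rw [add_mul]; exact S.add_mem (ha v hv) (hb v hv)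
      | smul c a _ ha => intro v hv; rw [smul_mul_assoc]; exact S.smul_mem _ (ha v hv)
    rw [eq_top_iff]
    rintro a -
    obtain ⟨b, rfl⟩ := RingQuot.mkAlgHom_surjective ℂ (relN N) a
    induction b using FreeAlgebra.induction with
    | grade0 r =>
        have : RingQuot.mkAlgHom ℂ (relN N) (algebraMap ℂ _ r) = r • 1 := by
          rw [AlgHom.commutes, Algebra.algebraMap_eq_smul_one]
        rw [this]; exact S.smul_mem _ h1
    | grade1 i =>
        fin_cases i
        · show xN N ∈ S
          simpa using hx 1
        · show yN N ∈ S
          exact hy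
    | add a b ha hb => rw [map_add]; exact S.add_mem ha hb
    | mul a b ha hb => rw [map_mul]; exact hmul _ ha _ hb
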